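/- Assume ≪ is dense and that (I⁻(p), I⁺(p)) ∈ R_pf for every p ∈ M. Define P̄ ≺_C Q̄ iff I⁻_C(P̄) ⊆ I⁻_C(Q̄) and I⁺_C(P̄) ⊇ I⁺_C(Q̄). Then for P̄ = (P,P*), Q̄ = (Q,Q*) ∈ M̄, P̄ ≺_C Q̄ implies P ⊆ Q and Q* ⊆ P*. -/
import Mathlib


open Set Topology

variable {M : Type*}

/-- Chronological past of a point: `I⁻(p) = {q | q ≪ p}`. -/
def Iminus (ll : M → M → Prop) (p : M) : Set M := {q | ll q p}

/-- Chronological future of a point: `I⁺(p) = {q | p ≪ q}`. -/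
def Iplus (ll : M → M → Prop) (p : M) : Set M := {q | ll p q}

/-- `I⁻[S] = ⋃_{p ∈ S} I⁻(p)`. -/
def IminusS (ll : M → M → Prop) (S : Set M) : Set M := ⋃ p ∈ S, Iminus ll p

/-- `I⁺[S] = ⋃_{p ∈ S} I⁺(p)`. -/
def IplusS (ll : M → M → Prop) (S : Set M) : Set M := ⋃ p ∈ S, Iplus ll p

/-- A past set is the past of some set. -/
def IsPastSet (ll : M → M → Prop) (P : Set M) : Prop := ∃ S : Set M, P = IminusS ll S

/-- A future set is the future of some set. -/
def IsFutureSet (ll : M → M → Prop) (F : Set M) : Prop := ∃ S : Set M, F = IplusS ll S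

/-- An IP: a nonempty past set that is not the union of two past sets that are
proper subsets of it. -/
def IsIP (ll : M → M → Prop) (P : Set M) : Prop :=
  IsPastSet ll P ∧ P.Nonempty ∧
    ¬ ∃ A B : Set M, IsPastSet ll A ∧ IsPastSet ll B ∧ A ⊂ P ∧ B ⊂ P ∧ P = A ∪ B

/-- An IF: a nonempty future set that is not the union of two future sets that are
proper subsets of it. -/
def IsIF (ll : M → M → Prop) (F : Set M) : Prop :=
  IsFutureSet ll F ∧ F.Nonempty ∧
    ¬ ∃ A B : Set M, IsFutureSet ll A ∧ IsFutureSet ll B ∧ A ⊂ F ∧ B ⊂ F ∧ F = A ∪ B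

/-- The common future `f(P)` of a past set. -/
def commonFuture (ll : M → M → Prop) (P : Set M) : Set M :=
  ⋃ x ∈ {x : M | P ⊆ Iminus ll x}, Iplus ll x

/-- The common past `p(F)` of a future set. -/
def commonPast (ll : M → M → Prop) (F : Set M) : Set M :=
  ⋃ x ∈ {x : M | F ⊆ Iplus ll x}, Iminus ll x

/-- The relation `R_pf`: pairs `(P, P*)` of an IP and an IF, each maximal in the
common future/past of the other. -/
def Rpf (ll : M → M → Prop) : Set (Set M × Set M) :=
  {PP | IsIP ll PP.1 ∧ IsIF ll PP.2 ∧
    PP.2 ⊆ commonFuture ll PP.1 ∧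
    (¬ ∃ R : Set M, IsIF ll R ∧ R ≠ PP.2 ∧ PP.2 ⊆ R ∧ R ⊆ commonFuture ll PP.1) ∧
    PP.1 ⊆ commonPast ll PP.2 ∧
    (¬ ∃ R : Set M, IsIP ll R ∧ R ≠ PP.1 ∧ PP.1 ⊆ R ∧ R ⊆ commonPast ll PP.2)}

/-- The causal completion `M̄`. -/
def Mbar (ll : M → M → Prop) : Set (Set M × Set M) :=
  {PP | PP ∈ Rpf ll ∨
    (PP.1 = ∅ ∧ IsIF ll PP.2 ∧ ¬ ∃ P : Set M, (P, PP.2) ∈ Rpf ll) ∨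
    (PP.2 = ∅ ∧ IsIP ll PP.1 ∧ ¬ ∃ F : Set M, (PP.1, F) ∈ Rpf ll)}

/-- The chronology `≪_C` on pairs: `(P,P*) ≪_C (Q,Q*)` iff `P* ∩ Q ≠ ∅`. -/
def chronC (PP QQ : Set M × Set M) : Prop := (PP.2 ∩ QQ.1).Nonempty

/-- The natural map `Φ : M → M̄`, `Φ(p) = (I⁻(p), I⁺(p))`. -/
def Phi (ll : M → M → Prop) (p : M) : Set M × Set M := (Iminus ll p, Iplus ll p)

/-- The chronology `≪` is dense. -/
def IsDenseChron (ll : M → M → Prop) : Prop := ∀ p q : M, ll p q → ∃ r : M, ll p r ∧ ll r q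

/-- `I⁺_C(P̄) = {R̄ ∈ M̄ : P̄ ≪_C R̄}`. -/
def IplusC (ll : M → M → Prop) (PP : Set M × Set M) : Set (Set M × Set M) :=
  {RR | RR ∈ Mbar ll ∧ chronC PP RR}

/-- `I⁻_C(P̄) = {R̄ ∈ M̄ : R̄ ≪_C P̄}`. -/
def IminusC (ll : M → M → Prop) (PP : Set M × Set M) : Set (Set M × Set M) :=
  {RR | RR ∈ Mbar ll ∧ chronC RR PP}

/-- `I⁺_C(S̄) = {Q̄ ∈ M̄ : ∃ P̄ ∈ S̄, P̄ ≪_C Q̄}`. -/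
def IplusCS (ll : M → M → Prop) (S : Set (Set M × Set M)) : Set (Set M × Set M) :=
  {QQ | QQ ∈ Mbar ll ∧ ∃ PP ∈ S, chronC PP QQ}

/-- `I⁻_C(S̄) = {Q̄ ∈ M̄ : ∃ P̄ ∈ S̄, Q̄ ≪_C P̄}`. -/
def IminusCS (ll : M → M → Prop) (S : Set (Set M × Set M)) : Set (Set M × Set M) :=
  {QQ | QQ ∈ Mbar ll ∧ ∃ PP ∈ S, chronC QQ PP}

/-- The causality `≺_C` defined from the chronology. -/
def causC (ll : M → M → Prop) (PP QQ : Set M × Set M) : Prop :=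
  IminusC ll PP ⊆ IminusC ll QQ ∧ IplusC ll QQ ⊆ IplusC ll PP

/-- The horismos `→_C` defined from `≺_C` and `≪_C`. -/
def horC (ll : M → M → Prop) (PP QQ : Set M × Set M) : Prop :=
  causC ll PP QQ ∧ ¬ chronC PP QQ

/-- `L⁺_IF(S̄) = {Q̄ ∈ M̄ : Q* ≠ ∅ and Q* ⊆ ⋃_{P̄ ∈ S̄} P*}`. -/
def LplusIF (ll : M → M → Prop) (S : Set (Set M × Set M)) : Set (Set M × Set M) :=
  {QQ | QQ ∈ Mbar ll ∧ QQ.2 ≠ ∅ ∧ QQ.2 ⊆ ⋃ PP ∈ S, PP.2}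

/-- `L⁻_IP(S̄) = {Q̄ ∈ M̄ : Q ≠ ∅ and Q ⊆ ⋃_{P̄ ∈ S̄} P}`. -/
def LminusIP (ll : M → M → Prop) (S : Set (Set M × Set M)) : Set (Set M × Set M) :=
  {QQ | QQ ∈ Mbar ll ∧ QQ.1 ≠ ∅ ∧ QQ.1 ⊆ ⋃ PP ∈ S, PP.1}

/-- `Q = lim P_n` for a sequence of past sets. -/
def limPast (ll : M → M → Prop) (Pn : ℕ → Set M) (Q : Set M) : Prop :=
  (∀ x ∈ Q, ∃ N : ℕ, ∀ n > N, x ∈ Pn n) ∧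
  (∀ x : M, ¬ Iminus ll x ⊆ Q → ∃ N : ℕ, ∀ n > N, ¬ Iminus ll x ⊆ Pn n)

/-- `Q = lim F_n` for a sequence of future sets. -/
def limFuture (ll : M → M → Prop) (Fn : ℕ → Set M) (Q : Set M) : Prop :=
  (∀ x ∈ Q, ∃ N : ℕ, ∀ n > N, x ∈ Fn n) ∧
  (∀ x : M, ¬ Iplus ll x ⊆ Q → ∃ N : ℕ, ∀ n > N, ¬ Iplus ll x ⊆ Fn n)

/-- Closure in the future boundary. -/
def ClFB (ll : M → M → Prop) (S : Set (Set M × Set M)) : Set (Set M × Set M) :=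
  S ∪ {QQ | QQ ∈ Mbar ll ∧ QQ.2 = ∅ ∧
        ∃ Pn : ℕ → Set M × Set M, (∀ n, Pn n ∈ S) ∧ limPast ll (fun n => (Pn n).1) QQ.1}

/-- Closure in the past boundary. -/
def ClPB (ll : M → M → Prop) (S : Set (Set M × Set M)) : Set (Set M × Set M) :=
  S ∪ {QQ | QQ ∈ Mbar ll ∧ QQ.1 = ∅ ∧
        ∃ Pn : ℕ → Set M × Set M, (∀ n, Pn n ∈ S) ∧ limFuture ll (fun n => (Pn n).2) QQ.2}

/-- `L⁺(S̄) = Cl_FB[S̄ ∪ L⁺_IF(S̄)]`. -/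
def Lplus (ll : M → M → Prop) (S : Set (Set M × Set M)) : Set (Set M × Set M) :=
  ClFB ll (S ∪ LplusIF ll S)

/-- `L⁻(S̄) = Cl_PB[S̄ ∪ L⁻_IP(S̄)]`. -/
def Lminus (ll : M → M → Prop) (S : Set (Set M × Set M)) : Set (Set M × Set M) :=
  ClPB ll (S ∪ LminusIP ll S)

/-- The topology `T̄` on `M̄`: the coarsest topology in which all the sets
`M̄ \ L⁺(S̄)` and `M̄ \ L⁻(S̄)` are open, for `S̄ ⊆ M̄`. -/
def Tbar (ll : M → M → Prop) : TopologicalSpace ↥(Mbar ll) :=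
  TopologicalSpace.generateFrom
    {U | ∃ S : Set (Set M × Set M), S ⊆ Mbar ll ∧
      (U = (Subtype.val ⁻¹' Lplus ll S)ᶜ ∨ U = (Subtype.val ⁻¹' Lminus ll S)ᶜ)}

/-- The alternative closure `Cl_+`. -/
def ClPlusAlt (ll : M → M → Prop) (X : Set (Set M × Set M)) : Set (Set M × Set M) :=
  X ∪ {QQ | QQ ∈ Mbar ll ∧ QQ.1 ≠ ∅ ∧
        ∃ Pn : ℕ → Set M × Set M, (∀ n, Pn n ∈ X) ∧ limPast ll (fun n => (Pn n).1) QQ.1}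

/-- The alternative closure `Cl_-`. -/
def ClMinusAlt (ll : M → M → Prop) (X : Set (Set M × Set M)) : Set (Set M × Set M) :=
  X ∪ {QQ | QQ ∈ Mbar ll ∧ QQ.2 ≠ ∅ ∧
        ∃ Pn : ℕ → Set M × Set M, (∀ n, Pn n ∈ X) ∧ limFuture ll (fun n => (Pn n).2) QQ.2}

/-- `L_alt⁺(S̄) = Cl_+[L⁺_IF(S̄)]`. -/
def LplusAlt (ll : M → M → Prop) (S : Set (Set M × Set M)) : Set (Set M × Set M) :=
  ClPlusAlt ll (LplusIF ll S)

/-- `L_alt⁻(S̄) = Cl_-[L⁻_IP(S̄)]`. -/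
def LminusAlt (ll : M → M → Prop) (S : Set (Set M × Set M)) : Set (Set M × Set M) :=
  ClMinusAlt ll (LminusIP ll S)

/-- `L_alt(S̄₁,S̄₂) = Cl_+[L⁻_IP(S̄₁) ∩ L⁺_IF(S̄₂)] ∪ Cl_-[L⁻_IP(S̄₁) ∩ L⁺_IF(S̄₂)]`. -/
def LaltPair (ll : M → M → Prop) (S1 S2 : Set (Set M × Set M)) : Set (Set M × Set M) :=
  ClPlusAlt ll (LminusIP ll S1 ∩ LplusIF ll S2) ∪
    ClMinusAlt ll (LminusIP ll S1 ∩ LplusIF ll S2)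

/-- The alternative topology `T̄_alt` on `M̄`. -/
def TbarAlt (ll : M → M → Prop) : TopologicalSpace ↥(Mbar ll) :=
  TopologicalSpace.generateFrom
    {U | (∃ S : Set (Set M × Set M), S ⊆ Mbar ll ∧
        (U = (Subtype.val ⁻¹' LplusAlt ll S)ᶜ ∨ U = (Subtype.val ⁻¹' LminusAlt ll S)ᶜ)) ∨
      (∃ S1 S2 : Set (Set M × Set M), S1 ⊆ Mbar ll ∧ S2 ⊆ Mbar ll ∧
        U = (Subtype.val ⁻¹' LaltPair ll S1 S2)ᶜ)}

lemma pastSet_lower {ll : M → M → Prop}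
    (htrans : ∀ p q r : M, ll p q → ll q r → ll p r)
    {P : Set M} (hP : IsPastSet ll P) {x y : M} (hy : y ∈ P) (hxy : ll x y) : x ∈ P := by
  obtain ⟨S, rfl⟩ := hP
  simp only [IminusS, mem_iUnion, Iminus, mem_setOf_eq] at hy ⊢
  obtain ⟨p, hp, hyp⟩ := hy
  exact ⟨p, hp, htrans _ _ _ hxy hyp⟩

lemma pastSet_dense {ll : M → M → Prop} (hdense : IsDenseChron ll)
    {P : Set M} (hP : IsPastSet ll P) {x : M} (hx : x ∈ P) : ∃ r ∈ P, ll x r := by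
  obtain ⟨S, rfl⟩ := hP
  simp only [IminusS, mem_iUnion, Iminus, mem_setOf_eq] at hx ⊢
  obtain ⟨p, hp, hxp⟩ := hx
  obtain ⟨r, hxr, hrp⟩ := hdense x p hxp
  exact ⟨r, ⟨p, hp, hrp⟩, hxr⟩

lemma futureSet_upper {ll : M → M → Prop}
    (htrans : ∀ p q r : M, ll p q → ll q r → ll p r)
    {F : Set M} (hF : IsFutureSet ll F) {x y : M} (hy : y ∈ F) (hxy : ll y x) : x ∈ F := by
  obtain ⟨S, rfl⟩ := hF
  simp only [IplusS, mem_iUnion, Iplus, mem_setOf_eq] at hy ⊢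
  obtain ⟨p, hp, hyp⟩ := hy
  exact ⟨p, hp, htrans _ _ _ hyp hxy⟩

lemma futureSet_dense {ll : M → M → Prop} (hdense : IsDenseChron ll)
    {F : Set M} (hF : IsFutureSet ll F) {x : M} (hx : x ∈ F) : ∃ r ∈ F, ll r x := by
  obtain ⟨S, rfl⟩ := hF
  simp only [IplusS, mem_iUnion, Iplus, mem_setOf_eq] at hx ⊢
  obtain ⟨p, hp, hpx⟩ := hx
  obtain ⟨r, hpr, hrx⟩ := hdense p x hpx
  exact ⟨r, ⟨p, hp, hpr⟩, hrx⟩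

lemma mbar_fst {ll : M → M → Prop} {PP : Set M × Set M} (h : PP ∈ Mbar ll) :
    PP.1 = ∅ ∨ IsPastSet ll PP.1 := by
  rcases h with h | h | h
  · exact Or.inr h.1.1
  · exact Or.inl h.1
  · exact Or.inr h.2.1.1

lemma mbar_snd {ll : M → M → Prop} {PP : Set M × Set M} (h : PP ∈ Mbar ll) :
    PP.2 = ∅ ∨ IsFutureSet ll PP.2 := by
  rcases h with h | h | h
  · exact Or.inr h.2.1.1
  · exact Or.inr h.2.1.1
  · exact Or.inl h.1

/-- `P̄ ≺_C Q̄` implies `P ⊆ Q` and `Q* ⊆ P*`. -/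
theorem causC_subset (ll : M → M → Prop)
    (htrans : ∀ p q r : M, ll p q → ll q r → ll p r)
    (hirr : ∀ p : M, ¬ ll p p)
    (hdense : IsDenseChron ll)
    (hphi : ∀ p : M, Phi ll p ∈ Rpf ll) :
    ∀ PP QQ : Set M × Set M, PP ∈ Mbar ll → QQ ∈ Mbar ll →
      causC ll PP QQ → PP.1 ⊆ QQ.1 ∧ QQ.2 ⊆ PP.2 := by
  intro PP QQ hP hQ hcaus
  constructor
  · intro x hx
    rcases mbar_fst hP with hPe | hPpast
    · rw [hPe] at hx; exact absurd hx (notMem_empty x)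
    obtain ⟨r, hrP, hxr⟩ := pastSet_dense hdense hPpast hx
    have hΦ : Phi ll x ∈ Mbar ll := Or.inl (hphi x)
    have hΦP : Phi ll x ∈ IminusC ll PP := ⟨hΦ, ⟨r, hxr, hrP⟩⟩
    obtain ⟨_, z, hxz, hzQ⟩ := hcaus.1 hΦP
    rcases mbar_fst hQ with hQe | hQpast
    · rw [hQe] at hzQ; exact absurd hzQ (notMem_empty z)
    · exact pastSet_lower htrans hQpast hzQ hxz
  · intro x hx
    rcases mbar_snd hQ with hQe | hQfut
    · rw [hQe] at hx; exact absurd hx (notMem_empty x)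
    obtain ⟨r, hrQ, hrx⟩ := futureSet_dense hdense hQfut hx
    have hΦ : Phi ll x ∈ Mbar ll := Or.inl (hphi x)
    have hΦQ : Phi ll x ∈ IplusC ll QQ := ⟨hΦ, ⟨r, hrQ, hrx⟩⟩
    obtain ⟨_, z, hzP, hzx⟩ := hcaus.2 hΦQ
    rcases mbar_snd hP with hPe | hPfut
    · rw [hPe] at hzP; exact absurd hzP (notMem_empty z)
    · exact futureSet_upper htrans hPfut hzP hzx
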